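/- Let σ > 0 and ω, c real with 4ω > c², and write φ = φ_{ω,c}, θ = θ_{ω,c}. Suppose χ₁₁ : ℝ → ℝ is a C² function with ∫_ℝ χ₁₁² dy = 1, satisfying the eigenvalue equation \tilde{L}_{11} χ₁₁ = −λ² χ₁₁ for some λ > 0, and satisfying an exponential decay bound |χ₁₁(y)| + |χ₁₁'(y)| ≤ C e^{−a|y|} for some C, a > 0. For any real constant k₁₂ define χ₁₂(y) = φ(y) [ −(σ/(σ+1)) ∫_{−∞}^{y} φ(s)^{2σ−1} χ₁₁(s) ds + k₁₂ ] and χ₋ = e^{iθ}(χ₁₁ + i χ₁₂). Then the quadratic form of the linearized operator at χ₋ equals Re ∫_ℝ (H_φ χ₋) \bar{χ}_₋ dy = −λ² < 0, because φ (χ₁₂/φ)' + (σ/(σ+1)) φ^{2σ} χ₁₁ ≡ 0. -/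

import Mathlib

open Real MeasureTheory

/-- The solitary wave profile `φ_{ω,c}` for the generalized DNLS equation. -/
noncomputable def solProfile (σ ω c : ℝ) (y : ℝ) : ℝ :=
  ((σ + 1) * (4 * ω - c ^ 2) /
      (2 * Real.sqrt ω *
        (Real.cosh (σ * Real.sqrt (4 * ω - c ^ 2) * y) - c / (2 * Real.sqrt ω)))) ^
    (1 / (2 * σ))

/-- The traveling phase `θ_{ω,c}`. -/
noncomputable def travPhase (σ ω c : ℝ) (y : ℝ) : ℝ :=
  c / 2 * y - (1 / (2 * σ + 2)) * ∫ η in Set.Iio y, solProfile σ ω c η ^ (2 * σ)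

/-- Block operator `L₁₁`. -/
noncomputable def opL11 (σ ω c : ℝ) (u : ℝ → ℝ) (y : ℝ) : ℝ :=
  -deriv (deriv u) y + (ω - c ^ 2 / 4) * u y
    + (c * (2 * σ + 1) / 2) * solProfile σ ω c y ^ (2 * σ) * u y
    - ((4 * σ ^ 2 + 6 * σ + 1) / (4 * (σ + 1) ^ 2)) * solProfile σ ω c y ^ (4 * σ) * u y

/-- Block operator `L₂₁`. -/
noncomputable def opL21 (σ ω c : ℝ) (u : ℝ → ℝ) (y : ℝ) : ℝ :=
  -(σ / (σ + 1)) * solProfile σ ω c y ^ (2 * σ - 1) * deriv (solProfile σ ω c) y * u y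
    + (σ / (σ + 1)) * solProfile σ ω c y ^ (2 * σ) * deriv u y

/-- Block operator `L₁₂`. -/
noncomputable def opL12 (σ ω c : ℝ) (u : ℝ → ℝ) (y : ℝ) : ℝ :=
  -((2 * σ + 1) * σ / (σ + 1)) * solProfile σ ω c y ^ (2 * σ - 1) * deriv (solProfile σ ω c) y * u y
    - (σ / (σ + 1)) * solProfile σ ω c y ^ (2 * σ) * deriv u y

/-- Block operator `L₂₂`. -/
noncomputable def opL22 (σ ω c : ℝ) (u : ℝ → ℝ) (y : ℝ) : ℝ :=
  -deriv (deriv u) y + (ω - c ^ 2 / 4) * u y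
    + (c / 2) * solProfile σ ω c y ^ (2 * σ) * u y
    - ((2 * σ + 1) / (4 * (σ + 1) ^ 2)) * solProfile σ ω c y ^ (4 * σ) * u y

/-- The linearized operator in dephased variables:
`H_φ (e^{iθ}(u₁+iu₂)) = e^{iθ}[(L₁₁u₁ + L₂₁u₂) + i(L₁₂u₁ + L₂₂u₂)]`. -/
noncomputable def opHde (σ ω c : ℝ) (u₁ u₂ : ℝ → ℝ) (y : ℝ) : ℂ :=
  Complex.exp (Complex.I * (travPhase σ ω c y : ℂ)) *
    (((opL11 σ ω c u₁ y + opL21 σ ω c u₂ y : ℝ) : ℂ)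
      + Complex.I * ((opL12 σ ω c u₁ y + opL22 σ ω c u₂ y : ℝ) : ℂ))


/-- The operator `L̃₁₁`. -/
noncomputable def opL11tilde (σ ω c : ℝ) (u : ℝ → ℝ) (y : ℝ) : ℝ :=
  -deriv (deriv u) y + (ω - c ^ 2 / 4) * u y
    + (c * (2 * σ + 1) / 2) * solProfile σ ω c y ^ (2 * σ) * u y
    - ((8 * σ ^ 2 + 6 * σ + 1) / (4 * (σ + 1) ^ 2)) * solProfile σ ω c y ^ (4 * σ) * u y

/-
Write `g = χ₁₂/φ`, so that `g' = −(σ/(σ+1)) φ^{2σ−1} χ₁₁`; this is the first claim. For this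
choice the second row of the dephased operator vanishes identically, `L₁₂χ₁₁ + L₂₂(φg) = 0`,
because `L₂₂φ = 0` is the profile equation, and the first row collapses to
`L₁₁χ₁₁ + L₂₁(φg) = L̃₁₁χ₁₁ = −λ²χ₁₁`. Hence `H_φ χ₋ = −λ² e^{iθ} χ₁₁` pointwise, and the
quadratic form is `−λ² ∫ χ₁₁² = −λ²`.

The analytic point is the convergence of `∫_{−∞}^y φ^{2σ−1} χ₁₁`, since `φ^{2σ−1}` blows up at
`−∞` when `σ < 1/2`. With `r = √(4ω − c²)`, `φ^p = O(e^{p r y/2})` as `y → −∞`, while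
`χ₁₁'' = Q χ₁₁` with `Q → r²/4 + λ² > r²/4`, so a maximum-principle comparison with `e^{r y/2}`
gives `χ₁₁ = O(e^{r y/2})`. The integrand is therefore `O(e^{σ r y})`.
-/

open Filter Set Asymptotics Topology

section MaximumPrinciple

lemma deriv_deriv_nonpos_of_isLocalMax {f : ℝ → ℝ} {x : ℝ} (hmax : IsLocalMax f x)
    (hc : ContinuousAt f x) : deriv (deriv f) x ≤ 0 := by
  by_contra! hpos
  have hmin := isLocalMin_of_deriv_deriv_pos hpos hmax.deriv_eq_zero hc
  have hconst : f =ᶠ[𝓝 x] fun _ => f x :=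
    (hmax.and hmin).mono fun y hy => le_antisymm hy.1 hy.2
  exact hpos.ne' (by simpa using hconst.deriv.deriv_eq)

variable {u : ℝ → ℝ} {μ : ℝ}

lemma le_mul_exp_of_sq_mul_le_deriv_deriv (hu : Differentiable ℝ u)
    (hu' : Differentiable ℝ (deriv u)) (hμ : μ ≠ 0) {R M : ℝ} (hM : 0 ≤ M) (hR : u R ≤ M)
    (hq : ∀ y ≤ R, 0 ≤ u y → μ ^ 2 * u y ≤ deriv (deriv u) y) (hlim : Tendsto u atBot (𝓝 0))
    {y : ℝ} (hy : y ≤ R) : u y ≤ M * exp (μ * (y - R)) := by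
  by_contra! hlt
  set v : ℝ → ℝ := fun t => M * exp (μ * (t - R))
  have hv_nonneg : ∀ t, 0 ≤ v t := fun t => by positivity
  have hv : ∀ t, HasDerivAt v (μ * v t) t := fun t => by
    refine ((((hasDerivAt_id t).sub_const R).const_mul μ).exp.const_mul M).congr_deriv ?_
    simp only [v, id]; ring_nf
  set w : ℝ → ℝ := fun t => u t - v t
  have hw_cont : Continuous w := hu.continuous.sub (continuous_iff_continuousAt.2
    fun t => (hv t).continuousAt)
  have hdw : deriv w = fun t => deriv u t - μ * v t :=
    funext fun t => ((hu t).hasDerivAt.sub (hv t)).deriv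
  have hwy : 0 < w y := by simp only [w]; linarith
  obtain ⟨Y, hY, hYy⟩ : ∃ Y, u Y < w y ∧ Y < y :=
    ((hlim.eventually (gt_mem_nhds hwy)).and (eventually_lt_atBot y)).exists
  obtain ⟨z, hz, hmax⟩ := isCompact_Icc.exists_isMaxOn (nonempty_Icc.2 (hYy.le.trans hy))
    hw_cont.continuousOn
  have hwz : w y ≤ w z := hmax ⟨hYy.le, hy⟩
  have hzR : z < R := by
    refine lt_of_le_of_ne hz.2 fun hzR => ?_
    have : w R ≤ 0 := by simp only [w, v, sub_self, mul_zero, exp_zero, mul_one]; linarith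
    rw [hzR] at hwz; linarith
  have hYz : Y < z := by
    refine lt_of_le_of_ne hz.1 fun hYz => ?_
    have : w Y ≤ u Y := by simp only [w]; linarith [hv_nonneg Y]
    rw [← hYz] at hwz; linarith
  -- `w = u - v` has a positive interior maximum `z` on `[Y, R]`, where `w'' ≥ μ² w > 0`.
  have hconc := deriv_deriv_nonpos_of_isLocalMax (hmax.isLocalMax (Icc_mem_nhds hYz hzR))
    hw_cont.continuousAt
  have hsub : 0 < μ ^ 2 * (u z - v z) := mul_pos (by positivity) (by simp only [w] at hwz; linarith)
  have hddw : deriv (fun t => deriv u t - μ * v t) z = deriv (deriv u) z - μ * (μ * v z) :=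
    ((hu' z).hasDerivAt.sub ((hv z).const_mul μ)).deriv
  rw [hdw, hddw] at hconc
  have := hq z hzR.le (by simp only [w] at hwz; linarith [hv_nonneg z])
  nlinarith [hv z]

lemma isBigO_exp_atBot_of_deriv_deriv_eq_mul {Q : ℝ → ℝ} (hu : Differentiable ℝ u)
    (hu' : Differentiable ℝ (deriv u)) (hμ : μ ≠ 0) (heq : ∀ y, deriv (deriv u) y = Q y * u y)
    (hQ : ∀ᶠ y in atBot, μ ^ 2 ≤ Q y) (hlim : Tendsto u atBot (𝓝 0)) :
    u =O[atBot] fun y => exp (μ * y) := by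
  obtain ⟨R, hR⟩ := eventually_atBot.1 hQ
  have hupper : ∀ y ≤ R, u y ≤ |u R| * exp (μ * (y - R)) := fun y hy =>
    le_mul_exp_of_sq_mul_le_deriv_deriv hu hu' hμ (abs_nonneg _) (le_abs_self _)
      (fun t ht hut => by rw [heq]; nlinarith [hR t ht]) hlim hy
  have hlower : ∀ y ≤ R, -u y ≤ |u R| * exp (μ * (y - R)) := by
    have hneg' : Differentiable ℝ (deriv (-u)) := by rw [deriv.neg']; exact hu'.neg
    have hq : ∀ t ≤ R, 0 ≤ (-u) t → μ ^ 2 * (-u) t ≤ deriv (deriv (-u)) t := by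
      intro t ht hut
      simp only [Pi.neg_apply, deriv.neg', deriv.fun_neg, heq] at hut ⊢
      nlinarith [hR t ht]
    have hlim' : Tendsto (-u) atBot (𝓝 0) := neg_zero (G := ℝ) ▸ hlim.neg
    exact fun y hy => le_mul_exp_of_sq_mul_le_deriv_deriv hu.neg hneg' hμ (abs_nonneg _)
      (by simpa using neg_le_abs (u R)) hq hlim' hy
  have hbound : ∀ y ≤ R, |u y| ≤ |u R| * exp (μ * (y - R)) := fun y hy =>
    abs_le.2 ⟨by linarith [hlower y hy], hupper y hy⟩
  refine IsBigO.of_bound (|u R| * exp (-(μ * R))) ?_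
  filter_upwards [eventually_le_atBot R] with y hy
  rw [norm_eq_abs, norm_of_nonneg (exp_pos _).le, mul_assoc, ← exp_add]
  convert hbound y hy using 3
  ring

end MaximumPrinciple

lemma integrableOn_Iio_of_isBigO_exp_atBot {f : ℝ → ℝ} {b : ℝ} (hb : 0 < b) (hf : Continuous f)
    (ho : f =O[atBot] fun y => exp (b * y)) (s : ℝ) : IntegrableOn f (Iio s) :=
  ((hf.continuousOn.locallyIntegrableOn measurableSet_Iic).integrableOn_of_isBigO_atBot ho
    ⟨Iic 0, Iic_mem_atBot 0, integrableOn_exp_mul_Iic hb 0⟩).mono_set Iio_subset_Iic_self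

lemma hasDerivAt_integral_Iio {f : ℝ → ℝ} (hf : Continuous f)
    (hint : ∀ s, IntegrableOn f (Iio s)) (y : ℝ) :
    HasDerivAt (fun s => ∫ t in Iio s, f t) (f y) y := by
  have key : (fun s => ∫ t in Iio s, f t) = fun s => (∫ t in Iio 0, f t) + ∫ t in 0..s, f t :=
    funext fun s => by rw [← intervalIntegral.integral_Iio_sub_Iio' (hint s) (hint 0)]; ring
  rw [key]
  exact (intervalIntegral.integral_hasDerivAt_right (hf.intervalIntegrable _ _)
    hf.aestronglyMeasurable.stronglyMeasurableAtFilter hf.continuousAt).const_add _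

lemma hasDerivAt_cosh_mul_sub (κ d y : ℝ) :
    HasDerivAt (fun y => cosh (κ * y) - d) (κ * sinh (κ * y)) y := by
  simpa [mul_comm] using (((hasDerivAt_id y).const_mul κ).cosh).sub_const d

lemma hasDerivAt_sinh_div_cosh_sub (κ d y : ℝ) (hW : cosh (κ * y) - d ≠ 0) :
    HasDerivAt (fun y => sinh (κ * y) / (cosh (κ * y) - d))
      (κ * (1 - d ^ 2 - d * (cosh (κ * y) - d)) / (cosh (κ * y) - d) ^ 2) y := by
  have hs : HasDerivAt (fun y => sinh (κ * y)) (κ * cosh (κ * y)) y := by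
    simpa [mul_comm] using ((hasDerivAt_id y).const_mul κ).sinh
  refine (hs.div (hasDerivAt_cosh_mul_sub κ d y) hW).congr_deriv ?_
  rw [← cosh_sq_sub_sinh_sq (κ * y)]
  ring

lemma exp_I_mul_ofReal_mul_conj_mul (θ : ℝ) (z w : ℂ) :
    Complex.exp (Complex.I * θ) * z * (starRingEnd ℂ) (Complex.exp (Complex.I * θ) * w)
      = z * (starRingEnd ℂ) w := by
  rw [map_mul, mul_mul_mul_comm, Complex.mul_conj', Complex.norm_exp_I_mul_ofReal]
  simp

section Profile

variable {σ ω c : ℝ}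

local notation "φ" => solProfile σ ω c

/-- Closed form of `φ^{2σ}`. -/
noncomputable def profilePow (σ ω c y : ℝ) : ℝ :=
  (σ + 1) * (4 * ω - c ^ 2) /
    (2 * √ω * (cosh (σ * √(4 * ω - c ^ 2) * y) - c / (2 * √ω)))

/-- Closed form of the logarithmic derivative `φ'/φ`. -/
noncomputable def profileLogDeriv (σ ω c y : ℝ) : ℝ :=
  -(√(4 * ω - c ^ 2) / 2) *
    (sinh (σ * √(4 * ω - c ^ 2) * y) / (cosh (σ * √(4 * ω - c ^ 2) * y) - c / (2 * √ω)))

lemma div_two_sqrt_lt_one (h : c ^ 2 < 4 * ω) : c / (2 * √ω) < 1 := by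
  have hω : 0 < ω := by nlinarith [sq_nonneg c]
  rw [div_lt_one (by positivity)]
  calc c ≤ |c| := le_abs_self c
    _ = √(c ^ 2) := (sqrt_sq_eq_abs c).symm
    _ < √(4 * ω) := sqrt_lt_sqrt (sq_nonneg c) h
    _ = 2 * √ω := by rw [sqrt_mul' _ hω.le, show (4 : ℝ) = 2 ^ 2 by norm_num, sqrt_sq two_pos.le]

lemma cosh_sub_div_pos (h : c ^ 2 < 4 * ω) (x : ℝ) : 0 < cosh x - c / (2 * √ω) := by
  linarith [one_le_cosh x, div_two_sqrt_lt_one h]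

lemma profilePow_pos (hσ : 0 < σ) (h : c ^ 2 < 4 * ω) (y : ℝ) : 0 < profilePow σ ω c y := by
  have hW := cosh_sub_div_pos h (σ * √(4 * ω - c ^ 2) * y)
  have hω : 0 < ω := by nlinarith [sq_nonneg c]
  have hr : 0 < 4 * ω - c ^ 2 := by linarith
  unfold profilePow
  positivity

lemma solProfile_eq_rpow (y : ℝ) : φ y = profilePow σ ω c y ^ (1 / (2 * σ)) := rfl

lemma solProfile_pos (hσ : 0 < σ) (h : c ^ 2 < 4 * ω) (y : ℝ) : 0 < φ y :=
  rpow_pos_of_pos (profilePow_pos hσ h y) _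

lemma solProfile_rpow_two_mul (hσ : 0 < σ) (h : c ^ 2 < 4 * ω) (y : ℝ) :
    φ y ^ (2 * σ) = profilePow σ ω c y := by
  rw [solProfile_eq_rpow, ← rpow_mul (profilePow_pos hσ h y).le,
    one_div_mul_cancel (by positivity), rpow_one]

lemma solProfile_rpow_sub_one_mul (hσ : 0 < σ) (h : c ^ 2 < 4 * ω) (p y : ℝ) :
    φ y ^ (p - 1) * φ y = φ y ^ p := by
  rw [rpow_sub_one (solProfile_pos hσ h y).ne', div_mul_cancel₀ _ (solProfile_pos hσ h y).ne']

lemma solProfile_rpow_four_mul (hσ : 0 < σ) (h : c ^ 2 < 4 * ω) (y : ℝ) :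
    φ y ^ (4 * σ) = φ y ^ (2 * σ) * φ y ^ (2 * σ) := by
  rw [← rpow_add (solProfile_pos hσ h y)]; ring_nf

lemma hasDerivAt_profilePow (h : c ^ 2 < 4 * ω) (y : ℝ) :
    HasDerivAt (profilePow σ ω c)
      (-profilePow σ ω c y * (σ * √(4 * ω - c ^ 2) * sinh (σ * √(4 * ω - c ^ 2) * y)) /
        (cosh (σ * √(4 * ω - c ^ 2) * y) - c / (2 * √ω))) y := by
  have hW := cosh_sub_div_pos h (σ * √(4 * ω - c ^ 2) * y)
  have hω : 0 < √ω := sqrt_pos.2 (by nlinarith [sq_nonneg c])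
  refine ((hasDerivAt_const y ((σ + 1) * (4 * ω - c ^ 2))).div
    ((hasDerivAt_cosh_mul_sub _ _ y).const_mul (2 * √ω)) (by positivity)).congr_deriv ?_
  unfold profilePow
  field_simp
  ring

lemma hasDerivAt_solProfile (hσ : 0 < σ) (h : c ^ 2 < 4 * ω) (y : ℝ) :
    HasDerivAt φ (φ y * profileLogDeriv σ ω c y) y := by
  have hF := profilePow_pos hσ h y
  refine ((hasDerivAt_profilePow h y).rpow_const (p := 1 / (2 * σ)) (Or.inl hF.ne')).congr_deriv ?_
  rw [rpow_sub_one hF.ne', ← solProfile_eq_rpow]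
  unfold profileLogDeriv
  field_simp

lemma deriv_solProfile (hσ : 0 < σ) (h : c ^ 2 < 4 * ω) :
    deriv φ = fun y => φ y * profileLogDeriv σ ω c y :=
  funext fun y => (hasDerivAt_solProfile hσ h y).deriv

lemma differentiable_solProfile (hσ : 0 < σ) (h : c ^ 2 < 4 * ω) : Differentiable ℝ φ :=
  fun y => (hasDerivAt_solProfile hσ h y).differentiableAt

lemma continuous_solProfile_rpow (hσ : 0 < σ) (h : c ^ 2 < 4 * ω) (p : ℝ) :
    Continuous fun y => φ y ^ p :=
  (differentiable_solProfile hσ h).continuous.rpow_const fun y => Or.inl (solProfile_pos hσ h y).ne'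

-- The Riccati form `ψ' + ψ² = φ''/φ` of the profile equation, for `ψ = φ'/φ`.
lemma hasDerivAt_profileLogDeriv (hσ : 0 < σ) (h : c ^ 2 < 4 * ω) (y : ℝ) :
    HasDerivAt (profileLogDeriv σ ω c)
      (ω - c ^ 2 / 4 + c / 2 * profilePow σ ω c y
        - (2 * σ + 1) / (4 * (σ + 1) ^ 2) * profilePow σ ω c y ^ 2
        - profileLogDeriv σ ω c y ^ 2) y := by
  have hω : 0 < ω := by nlinarith [sq_nonneg c]
  have hW := cosh_sub_div_pos h (σ * √(4 * ω - c ^ 2) * y)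
  refine ((hasDerivAt_sinh_div_cosh_sub _ _ y hW.ne').const_mul
    (-(√(4 * ω - c ^ 2) / 2))).congr_deriv ?_
  unfold profileLogDeriv profilePow
  have hS := cosh_sq_sub_sinh_sq (σ * √(4 * ω - c ^ 2) * y)
  have hR : √(4 * ω - c ^ 2) ^ 2 = 4 * ω - c ^ 2 := sq_sqrt (by linarith)
  have hs : 0 < √ω := sqrt_pos.2 hω
  have hs2 : √ω ^ 2 = ω := sq_sqrt hω.le
  generalize √(4 * ω - c ^ 2) = R at hW hS hR ⊢
  generalize √ω = s at hW hs hs2 ⊢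
  subst hs2
  generalize cosh (σ * R * y) = C at hW hS ⊢
  generalize sinh (σ * R * y) = S at hS ⊢
  obtain ⟨W, rfl⟩ : ∃ W, C = W + c / (2 * s) := ⟨C - c / (2 * s), by ring⟩
  rw [add_sub_cancel_right] at hW ⊢
  have : σ + 1 ≠ 0 := by positivity
  -- the coefficient of `hR` is `(ψ' + ψ²) / R²`
  linear_combination (norm := skip) (-R ^ 2 / (4 * W ^ 2)) * hS
    + (1 / 4 + (σ + 1) * c / (4 * s * W) - (2 * σ + 1) * (1 - (c / (2 * s)) ^ 2) / (4 * W ^ 2)) * hR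
  field_simp
  ring

lemma hasDerivAt_deriv_solProfile (hσ : 0 < σ) (h : c ^ 2 < 4 * ω) (y : ℝ) :
    HasDerivAt (deriv φ) (φ y * (ω - c ^ 2 / 4 + c / 2 * profilePow σ ω c y
        - (2 * σ + 1) / (4 * (σ + 1) ^ 2) * profilePow σ ω c y ^ 2)) y := by
  rw [deriv_solProfile hσ h]
  refine ((hasDerivAt_solProfile hσ h y).mul (hasDerivAt_profileLogDeriv hσ h y)).congr_deriv ?_
  ring

lemma opL22_solProfile (hσ : 0 < σ) (h : c ^ 2 < 4 * ω) (y : ℝ) :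
    opL22 σ ω c φ y = 0 := by
  rw [opL22, (hasDerivAt_deriv_solProfile hσ h y).deriv, solProfile_rpow_four_mul hσ h,
    solProfile_rpow_two_mul hσ h]
  ring

lemma tendsto_profilePow_mul_exp_atBot (hσ : 0 < σ) (h : c ^ 2 < 4 * ω) :
    Tendsto (fun y => profilePow σ ω c y * exp (-(σ * √(4 * ω - c ^ 2)) * y)) atBot
      (𝓝 ((σ + 1) * (4 * ω - c ^ 2) / √ω)) := by
  have hs : 0 < √ω := sqrt_pos.2 (by nlinarith [sq_nonneg c])
  set κ := σ * √(4 * ω - c ^ 2)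
  have hz : Tendsto (fun y => exp (κ * y)) atBot (𝓝 0) :=
    tendsto_exp_atBot.comp (tendsto_id.const_mul_atBot (by positivity))
  have key : ∀ y, profilePow σ ω c y * exp (-κ * y)
      = (σ + 1) * (4 * ω - c ^ 2) / (√ω * (exp (κ * y) ^ 2 + 1) - c * exp (κ * y)) := by
    intro y
    have hW := cosh_sub_div_pos h (κ * y)
    rw [profilePow, cosh_eq, neg_mul, exp_neg]
    field_simp
    rw [mul_comm y]
  simp_rw [key]
  refine tendsto_const_nhds.div ?_ (by positivity)
  simpa using ((hz.pow 2).add_const 1).const_mul √ω |>.sub (hz.const_mul c)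

lemma isBigO_solProfile_rpow_atBot (hσ : 0 < σ) (h : c ^ 2 < 4 * ω) (p : ℝ) :
    (fun y => φ y ^ p) =O[atBot] fun y => exp (p * (√(4 * ω - c ^ 2) / 2) * y) := by
  have hL : 0 < (σ + 1) * (4 * ω - c ^ 2) / √ω := by
    have : 0 < ω := by nlinarith [sq_nonneg c]
    have : 0 < 4 * ω - c ^ 2 := by linarith
    positivity
  have key : ∀ y, φ y ^ p = (profilePow σ ω c y * exp (-(σ * √(4 * ω - c ^ 2)) * y)) ^ (p / (2 * σ))
      * exp (p * (√(4 * ω - c ^ 2) / 2) * y) := by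
    intro y
    have hF := (profilePow_pos hσ h y).le
    rw [solProfile_eq_rpow, ← rpow_mul hF, mul_rpow hF (exp_pos _).le, ← exp_mul, mul_assoc,
      ← exp_add, one_div_mul_eq_div]
    convert (mul_one _).symm using 2
    rw [exp_eq_one_iff]
    field_simp
    ring
  simp_rw [key]
  simpa using (((tendsto_profilePow_mul_exp_atBot hσ h).rpow_const (p := p / (2 * σ))
    (Or.inl hL.ne')).isBigO_one ℝ).mul
      (isBigO_refl (fun y => exp (p * (√(4 * ω - c ^ 2) / 2) * y)) atBot)

lemma tendsto_solProfile_rpow_atBot (hσ : 0 < σ) (h : c ^ 2 < 4 * ω) {p : ℝ} (hp : 0 < p) :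
    Tendsto (fun y => φ y ^ p) atBot (𝓝 0) := by
  have hr : 0 < √(4 * ω - c ^ 2) := sqrt_pos.2 (by linarith)
  refine (isBigO_solProfile_rpow_atBot hσ h p).trans_tendsto ?_
  exact tendsto_exp_atBot.comp (tendsto_id.const_mul_atBot (by positivity))

lemma integrableOn_Iio_solProfile_rpow_mul (hσ : 0 < σ) (h : c ^ 2 < 4 * ω) {χ : ℝ → ℝ}
    (hχc : Continuous χ) (hχ : χ =O[atBot] fun y => exp (√(4 * ω - c ^ 2) / 2 * y)) (s : ℝ) :
    IntegrableOn (fun t => φ t ^ (2 * σ - 1) * χ t) (Iio s) := by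
  have hr : 0 < √(4 * ω - c ^ 2) := sqrt_pos.2 (by linarith)
  refine integrableOn_Iio_of_isBigO_exp_atBot (b := σ * √(4 * ω - c ^ 2)) (by positivity)
    ((continuous_solProfile_rpow hσ h _).mul hχc) ?_ s
  refine ((isBigO_solProfile_rpow_atBot hσ h _).mul hχ).congr_right fun y => ?_
  rw [← exp_add]
  ring_nf

lemma isBigO_exp_atBot_of_opL11tilde_eq (hσ : 0 < σ) (h : c ^ 2 < 4 * ω) {χ : ℝ → ℝ}
    (hχ : ContDiff ℝ 2 χ) {lam : ℝ} (hlam : lam ≠ 0)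
    (heig : ∀ y, opL11tilde σ ω c χ y = -lam ^ 2 * χ y) (hlim : Tendsto χ atBot (𝓝 0)) :
    χ =O[atBot] fun y => exp (√(4 * ω - c ^ 2) / 2 * y) := by
  have hQ : Tendsto (fun y => ω - c ^ 2 / 4 + lam ^ 2 + c * (2 * σ + 1) / 2 * φ y ^ (2 * σ)
      - (8 * σ ^ 2 + 6 * σ + 1) / (4 * (σ + 1) ^ 2) * φ y ^ (4 * σ)) atBot
      (𝓝 (ω - c ^ 2 / 4 + lam ^ 2)) := by
    simpa using (((tendsto_solProfile_rpow_atBot hσ h (by positivity : 0 < 2 * σ)).const_mul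
      (c * (2 * σ + 1) / 2)).const_add (ω - c ^ 2 / 4 + lam ^ 2)).sub
      ((tendsto_solProfile_rpow_atBot hσ h (by positivity : 0 < 4 * σ)).const_mul
        ((8 * σ ^ 2 + 6 * σ + 1) / (4 * (σ + 1) ^ 2)))
  have hrate : (√(4 * ω - c ^ 2) / 2) ^ 2 < ω - c ^ 2 / 4 + lam ^ 2 := by
    rw [div_pow, sq_sqrt (by linarith)]
    linarith [pow_pos (abs_pos.2 hlam) 2, sq_abs lam]
  have hr : 0 < √(4 * ω - c ^ 2) := sqrt_pos.2 (by linarith)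
  refine isBigO_exp_atBot_of_deriv_deriv_eq_mul (hχ.differentiable (by norm_num))
    hχ.differentiable_deriv_two (by positivity) (fun y => ?_) (hQ.eventually (eventually_ge_nhds hrate)) hlim
  have := heig y
  rw [opL11tilde] at this
  linear_combination -this

variable {χ g : ℝ → ℝ}

lemma solProfile_mul_deriv_div_solProfile_add (hσ : 0 < σ) (h : c ^ 2 < 4 * ω) {y : ℝ}
    (hg : HasDerivAt g (-(σ / (σ + 1)) * (φ y ^ (2 * σ - 1) * χ y)) y) :
    φ y * deriv (fun s => φ s * g s / φ s) y + σ / (σ + 1) * φ y ^ (2 * σ) * χ y = 0 := by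
  have hdiv : (fun s => φ s * g s / φ s) = g :=
    funext fun s => mul_div_cancel_left₀ _ (solProfile_pos hσ h s).ne'
  rw [hdiv, hg.deriv]
  linear_combination -(σ / (σ + 1)) * χ y * solProfile_rpow_sub_one_mul hσ h (2 * σ) y

lemma opL11_add_opL21_solProfile_mul (hσ : 0 < σ) (h : c ^ 2 < 4 * ω) {y : ℝ}
    (hg : HasDerivAt g (-(σ / (σ + 1)) * (φ y ^ (2 * σ - 1) * χ y)) y) :
    opL11 σ ω c χ y + opL21 σ ω c (fun s => φ s * g s) y = opL11tilde σ ω c χ y := by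
  rw [opL11, opL21, opL11tilde, ((differentiable_solProfile hσ h y).hasDerivAt.fun_mul hg).deriv,
    solProfile_rpow_four_mul hσ h]
  have : σ + 1 ≠ 0 := by positivity
  linear_combination (norm := skip) (-(σ / (σ + 1)) ^ 2 * φ y ^ (2 * σ) * χ y
    - σ / (σ + 1) * deriv φ y * g y) * solProfile_rpow_sub_one_mul hσ h (2 * σ) y
  field_simp
  ring

lemma opL12_add_opL22_solProfile_mul (hσ : 0 < σ) (h : c ^ 2 < 4 * ω) (hχ : Differentiable ℝ χ)
    (hg : ∀ y, HasDerivAt g (-(σ / (σ + 1)) * (φ y ^ (2 * σ - 1) * χ y)) y) (y : ℝ) :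
    opL12 σ ω c χ y + opL22 σ ω c (fun s => φ s * g s) y = 0 := by
  have hφ := differentiable_solProfile hσ h
  have hpow : HasDerivAt (fun t => φ t ^ (2 * σ)) (deriv φ y * (2 * σ) * φ y ^ (2 * σ - 1)) y :=
    (hφ y).hasDerivAt.rpow_const (Or.inl (solProfile_pos hσ h y).ne')
  have hd : deriv (fun s => φ s * g s)
      = fun t => deriv φ t * g t - σ / (σ + 1) * (φ t ^ (2 * σ) * χ t) := funext fun t => by
    rw [((hφ t).hasDerivAt.fun_mul (hg t)).deriv]
    linear_combination -(σ / (σ + 1)) * χ t * solProfile_rpow_sub_one_mul hσ h (2 * σ) t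
  have hdd : deriv (deriv (fun s => φ s * g s)) y
      = deriv (deriv φ) y * g y + deriv φ y * (-(σ / (σ + 1)) * (φ y ^ (2 * σ - 1) * χ y))
        - σ / (σ + 1) * (deriv φ y * (2 * σ) * φ y ^ (2 * σ - 1) * χ y
          + φ y ^ (2 * σ) * deriv χ y) := by
    rw [hd]
    exact (((hasDerivAt_deriv_solProfile hσ h y).differentiableAt.hasDerivAt.mul (hg y)).sub
      ((hpow.mul (hχ y).hasDerivAt).const_mul _)).deriv
  have hprofile := opL22_solProfile hσ h y
  rw [opL22] at hprofile
  rw [opL12, opL22, hdd]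
  linear_combination g y * hprofile

lemma opHde_solProfile_mul (hσ : 0 < σ) (h : c ^ 2 < 4 * ω) (hχ : Differentiable ℝ χ)
    (hg : ∀ y, HasDerivAt g (-(σ / (σ + 1)) * (φ y ^ (2 * σ - 1) * χ y)) y) (y : ℝ) :
    opHde σ ω c χ (fun s => φ s * g s) y
      = Complex.exp (Complex.I * travPhase σ ω c y) * opL11tilde σ ω c χ y := by
  rw [opHde, opL11_add_opL21_solProfile_mul hσ h (hg y),
    opL12_add_opL22_solProfile_mul hσ h hχ hg y]
  simp

lemma re_opHde_solProfile_mul_mul_conj (hσ : 0 < σ) (h : c ^ 2 < 4 * ω)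
    (hχ : Differentiable ℝ χ)
    (hg : ∀ y, HasDerivAt g (-(σ / (σ + 1)) * (φ y ^ (2 * σ - 1) * χ y)) y) (y : ℝ) :
    (opHde σ ω c χ (fun s => φ s * g s) y * (starRingEnd ℂ)
      (Complex.exp (Complex.I * travPhase σ ω c y) * (χ y + Complex.I * ((φ y * g y : ℝ) : ℂ)))).re
      = opL11tilde σ ω c χ y * χ y := by
  rw [opHde_solProfile_mul hσ h hχ hg, exp_I_mul_ofReal_mul_conj_mul]
  simp

end Profile


theorem negative_direction_general (σ ω c : ℝ) (hσ : 0 < σ) (h : c ^ 2 < 4 * ω)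
    (χ₁₁ : ℝ → ℝ) (hχ : ContDiff ℝ 2 χ₁₁)
    (hnorm : (∫ y : ℝ, χ₁₁ y ^ 2) = 1)
    (lam : ℝ) (hlam : 0 < lam)
    (heig : ∀ y : ℝ, opL11tilde σ ω c χ₁₁ y = -lam ^ 2 * χ₁₁ y)
    (C a : ℝ) (ha : 0 < a)
    (hdecay : ∀ y : ℝ, |χ₁₁ y| + |deriv χ₁₁ y| ≤ C * Real.exp (-a * |y|))
    (k₁₂ : ℝ) :
    (∀ y : ℝ,
        solProfile σ ω c y *
            deriv (fun s =>
              (solProfile σ ω c s *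
                (-(σ / (σ + 1)) * (∫ t in Set.Iio s, solProfile σ ω c t ^ (2 * σ - 1) * χ₁₁ t)
                  + k₁₂)) / solProfile σ ω c s) y
          + (σ / (σ + 1)) * solProfile σ ω c y ^ (2 * σ) * χ₁₁ y = 0) ∧
    (∫ y : ℝ,
        (opHde σ ω c χ₁₁
            (fun s =>
              solProfile σ ω c s *
                (-(σ / (σ + 1)) * (∫ t in Set.Iio s, solProfile σ ω c t ^ (2 * σ - 1) * χ₁₁ t)
                  + k₁₂)) y *
          (starRingEnd ℂ) (Complex.exp (Complex.I * (travPhase σ ω c y : ℂ)) *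
            ((χ₁₁ y : ℂ) + Complex.I *
              ((solProfile σ ω c y *
                (-(σ / (σ + 1)) * (∫ t in Set.Iio y, solProfile σ ω c t ^ (2 * σ - 1) * χ₁₁ t)
                  + k₁₂) : ℝ) : ℂ)))).re)
      = -lam ^ 2 ∧
    -lam ^ 2 < 0 := by
  have hlim : Tendsto χ₁₁ atBot (𝓝 0) := by
    refine squeeze_zero_norm (fun y => (le_add_of_nonneg_right (abs_nonneg _)).trans (hdecay y)) ?_
    simpa using (tendsto_exp_atBot.comp (tendsto_neg_atTop_atBot.comp
      (tendsto_abs_atBot_atTop.const_mul_atTop ha))).const_mul C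
  have hint := integrableOn_Iio_solProfile_rpow_mul hσ h hχ.continuous
    (isBigO_exp_atBot_of_opL11tilde_eq hσ h hχ hlam.ne' heig hlim)
  have hg : ∀ y, HasDerivAt
      (fun s => -(σ / (σ + 1)) * (∫ t in Iio s, solProfile σ ω c t ^ (2 * σ - 1) * χ₁₁ t) + k₁₂)
      (-(σ / (σ + 1)) * (solProfile σ ω c y ^ (2 * σ - 1) * χ₁₁ y)) y := fun y =>
    ((hasDerivAt_integral_Iio ((continuous_solProfile_rpow hσ h _).mul hχ.continuous) hint
      y).const_mul _).add_const _
  refine ⟨fun y => solProfile_mul_deriv_div_solProfile_add hσ h (hg y), ?_,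
    neg_neg_of_pos (pow_pos hlam 2)⟩
  rw [integral_congr_ae (ae_of_all _
    (re_opHde_solProfile_mul_mul_conj hσ h (hχ.differentiable (by norm_num)) hg))]
  simp_rw [heig, mul_assoc, ← sq]
  rw [integral_const_mul, hnorm, mul_one]

theorem negative_direction (σ ω c : ℝ) (hσ : 0 < σ) (h : c ^ 2 < 4 * ω)
    (χ₁₁ : ℝ → ℝ) (hχ : ContDiff ℝ 2 χ₁₁)
    (hnorm : (∫ y : ℝ, χ₁₁ y ^ 2) = 1)
    (lam : ℝ) (hlam : 0 < lam)
    (heig : ∀ y : ℝ, opL11tilde σ ω c χ₁₁ y = -lam ^ 2 * χ₁₁ y)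
    (C a : ℝ) (hC : 0 < C) (ha : 0 < a)
    (hdecay : ∀ y : ℝ, |χ₁₁ y| + |deriv χ₁₁ y| ≤ C * Real.exp (-a * |y|))
    (k₁₂ : ℝ) :
    (∀ y : ℝ,
        solProfile σ ω c y *
            deriv (fun s =>
              (solProfile σ ω c s *
                (-(σ / (σ + 1)) * (∫ t in Set.Iio s, solProfile σ ω c t ^ (2 * σ - 1) * χ₁₁ t)
                  + k₁₂)) / solProfile σ ω c s) y
          + (σ / (σ + 1)) * solProfile σ ω c y ^ (2 * σ) * χ₁₁ y = 0) ∧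
    (∫ y : ℝ,
        (opHde σ ω c χ₁₁
            (fun s =>
              solProfile σ ω c s *
                (-(σ / (σ + 1)) * (∫ t in Set.Iio s, solProfile σ ω c t ^ (2 * σ - 1) * χ₁₁ t)
                  + k₁₂)) y *
          (starRingEnd ℂ) (Complex.exp (Complex.I * (travPhase σ ω c y : ℂ)) *
            ((χ₁₁ y : ℂ) + Complex.I *
              ((solProfile σ ω c y *
                (-(σ / (σ + 1)) * (∫ t in Set.Iio y, solProfile σ ω c t ^ (2 * σ - 1) * χ₁₁ t)
                  + k₁₂) : ℝ) : ℂ)))).re)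
      = -lam ^ 2 ∧
    -lam ^ 2 < 0 :=
  negative_direction_general σ ω c hσ h χ₁₁ hχ hnorm lam hlam heig C a ha hdecay k₁₂
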